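/- Let ι : ℚ/ℤ → ℝ/ℤ be the additive group homomorphism induced by the inclusion ℚ ↪ ℝ (which sends the class of a rational q to the class of q in ℝ/ℤ). Let H be a finitely generated additive commutative group and let φ : H → ℝ/ℤ be an additive group homomorphism. Then φ has finite additive order in the group of additive homomorphisms from H to ℝ/ℤ if and only if there exists an additive group homomorphism ψ : H → ℚ/ℤ with φ = ι ∘ ψ. -/
import Mathlib

/-- The additive group homomorphism `ι : ℚ/ℤ → ℝ/ℤ` induced by the
inclusion `ℚ ↪ ℝ`: it sends the class of a rational `q` to the class of
`(q : ℝ)`. -/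
noncomputable def ratCircleToRealCircle :
    AddCircle (1 : ℚ) →+ AddCircle (1 : ℝ) :=
  QuotientAddGroup.map (AddSubgroup.zmultiples (1 : ℚ))
    (AddSubgroup.zmultiples (1 : ℝ)) (Rat.castHom ℝ).toAddMonoidHom
    (by
      intro x hx
      obtain ⟨n, hn⟩ := AddSubgroup.mem_zmultiples_iff.mp hx
      refine AddSubgroup.mem_comap.mpr (AddSubgroup.mem_zmultiples_iff.mpr ⟨n, ?_⟩)
      rw [← hn]
      simp)

lemma ratCircleToRealCircle_coe (q : ℚ) :
    ratCircleToRealCircle (q : AddCircle (1 : ℚ)) = ((q : ℝ) : AddCircle (1 : ℝ)) := rfl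

lemma ratCircleToRealCircle_injective : Function.Injective ratCircleToRealCircle := by
  rw [injective_iff_map_eq_zero]
  intro a ha
  induction a using QuotientAddGroup.induction_on with
  | H q =>
    rw [ratCircleToRealCircle_coe] at ha
    rw [AddCircle.coe_eq_zero_iff] at ha ⊢
    obtain ⟨n, hn⟩ := ha
    have h1 : (n : ℝ) = (q : ℝ) := by simpa using hn
    have h2 : (n : ℚ) = q := by exact_mod_cast h1
    exact ⟨n, by simpa using h2⟩

lemma ratCircle_torsion (x : AddCircle (1 : ℚ)) : ∃ n : ℕ, 0 < n ∧ n • x = 0 := by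
  induction x using QuotientAddGroup.induction_on with
  | H q =>
    refine ⟨q.den, q.pos, ?_⟩
    rw [show ((q.den : ℕ) • (q : AddCircle (1 : ℚ))) = (((q.den : ℚ) * q : ℚ) : AddCircle (1 : ℚ)) by
      rw [← AddCircle.coe_nsmul, nsmul_eq_mul]]
    rw [AddCircle.coe_eq_zero_iff]
    refine ⟨q.num, ?_⟩
    have hden : (q.den : ℚ) ≠ 0 := by exact_mod_cast q.den_ne_zero
    have : (q.den : ℚ) * q = (q.num : ℚ) := by
      have h := Rat.num_div_den q
      rw [div_eq_iff hden] at h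
      rw [mul_comm]; exact h.symm
    rw [this]
    simp

/-- For `H` a finitely generated additive commutative group, an additive
homomorphism `φ : H → ℝ/ℤ` has finite additive order in the group of additive
homomorphisms `H → ℝ/ℤ` if and only if it factors as `ι ∘ ψ` for some additive
homomorphism `ψ : H → ℚ/ℤ`. -/
theorem torsion_hom_iff_lifts_to_ratCircle
    (H : Type*) [AddCommGroup H] [AddGroup.FG H] (φ : H →+ AddCircle (1 : ℝ)) :
    (∃ N : ℕ, 0 < N ∧ N • φ = 0) ↔
      ∃ ψ : H →+ AddCircle (1 : ℚ), φ = ratCircleToRealCircle.comp ψ := by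
  constructor
  · rintro ⟨N, hN, hNφ⟩
    have hrange : ∀ h : H, φ h ∈ ratCircleToRealCircle.range := by
      intro h
      obtain ⟨r, hr⟩ := QuotientAddGroup.mk_surjective (φ h)
      have hφh : (N : ℤ) • (r : AddCircle (1 : ℝ)) = 0 := by
        rw [hr]
        have := congrArg (fun f : H →+ AddCircle (1 : ℝ) => f h) hNφ
        simpa using this
      have hmem : ((N : ℝ) * r : ℝ) ∈ AddSubgroup.zmultiples (1 : ℝ) := by
        rw [← QuotientAddGroup.eq_zero_iff]
        have h2 : (((N : ℝ) * r : ℝ) : AddCircle (1 : ℝ)) = (N : ℤ) • (r : AddCircle (1 : ℝ)) := by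
          rw [← AddCircle.coe_zsmul]
          norm_num [zsmul_eq_mul]
        rw [h2]; exact hφh
      obtain ⟨m, hm⟩ := AddSubgroup.mem_zmultiples_iff.mp hmem
      have hm' : (m : ℝ) = (N : ℝ) * r := by simpa using hm
      have hN' : (N : ℝ) ≠ 0 := by positivity
      have hrq : r = ((m / N : ℚ) : ℝ) := by
        push_cast
        field_simp
        linarith
      exact ⟨((m / N : ℚ) : AddCircle (1 : ℚ)), by rw [ratCircleToRealCircle_coe, ← hrq, hr]⟩
    set e := AddMonoidHom.ofInjective ratCircleToRealCircle_injective with he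
    refine ⟨e.symm.toAddMonoidHom.comp (φ.codRestrict ratCircleToRealCircle.range hrange), ?_⟩
    ext h
    simp only [AddMonoidHom.comp_apply, AddMonoidHom.codRestrict_apply, AddEquiv.coe_toAddMonoidHom]
    exact (AddMonoidHom.apply_ofInjective_symm ratCircleToRealCircle_injective
      (⟨φ h, hrange h⟩ : ratCircleToRealCircle.range)).symm
  · rintro ⟨ψ, rfl⟩
    obtain ⟨S, hS, hfin⟩ := AddGroup.fg_iff.mp ‹AddGroup.FG H›
    haveI := hfin.fintype
    classical
    choose n hn hn0 using fun s : S => ratCircle_torsion (ψ s)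
    refine ⟨∏ s : S, n s, Finset.prod_pos (fun s _ => hn s), ?_⟩
    set N := ∏ s : S, n s with hNdef
    have hker : ∀ h : H, N • ψ h = 0 := by
      have hle : AddSubgroup.closure S ≤ (N • ψ).ker := by
        rw [AddSubgroup.closure_le]
        intro s hs
        have hdvd : n ⟨s, hs⟩ ∣ N := Finset.dvd_prod_of_mem _ (Finset.mem_univ (⟨s, hs⟩ : S))
        obtain ⟨c, hc⟩ := hdvd
        have h0 : n ⟨s, hs⟩ • ψ s = 0 := hn0 ⟨s, hs⟩
        have : N • ψ s = 0 := by
          rw [hc, mul_nsmul, h0, smul_zero]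
        simpa [AddMonoidHom.mem_ker] using this
      intro h
      have := hle (hS ▸ AddSubgroup.mem_top h)
      simpa [AddMonoidHom.mem_ker] using this
    ext h
    simp [AddMonoidHom.nsmul_apply, ← map_nsmul, hker h]
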